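/- Let n ≥ 1, let f ∈ (0,1), let R ∈ ℝ^n with R ≥ 0 componentwise and R ≠ 0, let ℓ ∈ ℝ^n with ℓ ≥ 0 componentwise, and let F : ℝ^n → ℝ be differentiable on the open positive orthant ℝ^n_{++} with 1 + F(p) > 0 for all p ∈ ℝ^n_{++}. Define V_new(p) = (p · R)/(1 + F(p)) + f (p · ℓ). Suppose ∇F(p) · p = 0 for all p ∈ ℝ^n_{++} (as follows from homogeneity of degree zero of F), and suppose there exists c ∈ (0,1) such that ∇V_new(p) ≤ c R componentwise for all p ∈ ℝ^n_{++}. Then F(p) ≥ 1/c − 1 > 0 for every p ∈ ℝ^n_{++}. -/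

import Mathlib

/-!
The numerator `p · R` and the lending term `f (p · ℓ)` are linear and `1 + F` has zero radial
derivative, so Euler's identity gives `∇V_new(p) · p = V_new(p) = (p · R) / (1 + F p) + f (p · ℓ)`.
Pairing `∇V_new(p) ≤ c R` with `p > 0` bounds this by `c (p · R)`; dropping the nonnegative
lending term and dividing by `p · R > 0` leaves `1 ≤ c (1 + F p)`.
-/

open RealInnerProductSpace

theorem HasFDerivAt.div {𝕜 E : Type*} [NontriviallyNormedField 𝕜] [NormedAddCommGroup E]
    [NormedSpace 𝕜 E] {c d : E → 𝕜} {c' d' : StrongDual 𝕜 E} {x : E}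
    (hc : HasFDerivAt c c' x) (hd : HasFDerivAt d d' x) (hx : d x ≠ 0) :
    HasFDerivAt (fun y => c y / d y) ((d x)⁻¹ • c' - (c x / d x ^ 2) • d') x := by
  simp only [div_eq_mul_inv]
  refine (hc.mul ((hasFDerivAt_inv hx).comp x hd)).congr_fderiv ?_
  ext v
  simp
  ring

namespace EuclideanSpace

variable {ι : Type*} [Fintype ι]

theorem isOpen_setOf_forall_pos : IsOpen {p : EuclideanSpace ℝ ι | ∀ i, 0 < p i} := by
  simp only [Set.ofPred_forall]
  exact isOpen_iInter_of_finite fun i => isOpen_lt continuous_const (proj i).continuous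

theorem sum_mul_eq_inner (q w : EuclideanSpace ℝ ι) : ∑ j, q j * w j = ⟪w, q⟫ := by
  simp [PiLp.inner_apply]

theorem hasFDerivAt_sum_mul (w p : EuclideanSpace ℝ ι) :
    HasFDerivAt (fun q : EuclideanSpace ℝ ι => ∑ j, q j * w j) (innerSL ℝ w) p := by
  convert (innerSL ℝ w).hasFDerivAt using 1
  ext q
  simp [sum_mul_eq_inner]

theorem sum_gradient_mul_eq_fderiv (h : EuclideanSpace ℝ ι → ℝ) (p v : EuclideanSpace ℝ ι) :
    ∑ i, gradient h p i * v i = fderiv ℝ h p v := by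
  rw [← inner_gradient_left, real_inner_comm, sum_mul_eq_inner]

theorem sum_mul_pos {p R : EuclideanSpace ℝ ι} (hp : ∀ i, 0 < p i) (hR : ∀ i, 0 ≤ R i)
    (hR0 : R ≠ 0) : 0 < ∑ j, p j * R j := by
  obtain ⟨i, hi⟩ : ∃ i, R i ≠ 0 := by
    by_contra! h
    exact hR0 (by ext i; simpa using h i)
  exact Finset.sum_pos' (fun j _ => mul_nonneg (hp j).le (hR j))
    ⟨i, Finset.mem_univ i, mul_pos (hp i) ((hR i).lt_of_ne' hi)⟩

noncomputable abbrev poolValue (f : ℝ) (R ℓ : EuclideanSpace ℝ ι) (F : EuclideanSpace ℝ ι → ℝ)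
    (q : EuclideanSpace ℝ ι) : ℝ :=
  (∑ j, q j * R j) / (1 + F q) + f * ∑ j, q j * ℓ j

theorem sum_gradient_poolValue_mul_self (f : ℝ) (R ℓ : EuclideanSpace ℝ ι)
    {F : EuclideanSpace ℝ ι → ℝ} {p : EuclideanSpace ℝ ι} (hF : DifferentiableAt ℝ F p)
    (hFp : 1 + F p ≠ 0) (heuler : ∑ i, gradient F p i * p i = 0) :
    ∑ i, gradient (poolValue f R ℓ F) p i * p i =
      (∑ j, p j * R j) / (1 + F p) + f * ∑ j, p j * ℓ j := by
  rw [sum_gradient_mul_eq_fderiv] at heuler ⊢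
  have hV : HasFDerivAt (poolValue f R ℓ F) _ p :=
    ((hasFDerivAt_sum_mul R p).div (hF.hasFDerivAt.const_add 1) hFp).add
      ((hasFDerivAt_sum_mul ℓ p).const_mul f)
  rw [hV.fderiv]
  simp [heuler, sum_mul_eq_inner]
  field_simp

end EuclideanSpace

theorem uniform_shrinkage_forces_positive_discount_general (n : ℕ)
    (f : ℝ) (hf : f ∈ Set.Ioo (0 : ℝ) 1)
    (R : EuclideanSpace ℝ (Fin n)) (hR : ∀ i, 0 ≤ R i) (hR0 : R ≠ 0)
    (ℓ : EuclideanSpace ℝ (Fin n)) (hℓ : ∀ i, 0 ≤ ℓ i)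
    (F : EuclideanSpace ℝ (Fin n) → ℝ)
    (hFdiff : DifferentiableOn ℝ F {p : EuclideanSpace ℝ (Fin n) | ∀ i, 0 < p i})
    (hF : ∀ p : EuclideanSpace ℝ (Fin n), (∀ i, 0 < p i) → 0 < 1 + F p)
    (heuler : ∀ p : EuclideanSpace ℝ (Fin n), (∀ i, 0 < p i) →
      ∑ i, gradient F p i * p i = 0)
    (c : ℝ) (hc : c ∈ Set.Ioo (0 : ℝ) 1)
    (hshrink : ∀ p : EuclideanSpace ℝ (Fin n), (∀ i, 0 < p i) →
      ∀ i, gradient (fun q : EuclideanSpace ℝ (Fin n) =>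
        (∑ j, q j * R j) / (1 + F q) + f * (∑ j, q j * ℓ j)) p i ≤ c * R i) :
    ∀ p : EuclideanSpace ℝ (Fin n), (∀ i, 0 < p i) →
      1 / c - 1 ≤ F p ∧ 0 < 1 / c - 1 := by
  intro p hp
  obtain ⟨hc0, hc1⟩ := hc
  set S := ∑ j, p j * R j
  have ha := hF p hp
  have hT : 0 ≤ f * ∑ j, p j * ℓ j :=
    mul_nonneg hf.1.le (Finset.sum_nonneg fun j _ => mul_nonneg (hp j).le (hℓ j))
  have hradial := EuclideanSpace.sum_gradient_poolValue_mul_self f R ℓ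
    (hFdiff.differentiableAt (EuclideanSpace.isOpen_setOf_forall_pos.mem_nhds hp)) ha.ne'
    (heuler p hp)
  have hbound : ∑ i, gradient (EuclideanSpace.poolValue f R ℓ F) p i * p i ≤ c * S := by
    rw [Finset.mul_sum]
    exact Finset.sum_le_sum fun i _ =>
      (mul_le_mul_of_nonneg_right (hshrink p hp i) (hp i).le).trans_eq (by ring)
  have hS_div : S * (1 / (1 + F p)) ≤ S * c := by
    rw [mul_one_div, mul_comm S c]
    linarith
  have hinv : 1 / c ≤ 1 + F p :=
    (one_div_le hc0 ha).2 (le_of_mul_le_mul_left hS_div (EuclideanSpace.sum_mul_pos hp hR hR0))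
  exact ⟨by linarith, by linarith [one_lt_one_div hc0 hc1]⟩

/-- If `∇F(p)·p = 0` on the open positive orthant and there is `c ∈ (0,1)` with
`∇V_new(p) ≤ cR` componentwise on the orthant, where
`V_new(p) = (p·R)/(1+F p) + f (p·ℓ)`, then `F(p) ≥ 1/c - 1 > 0` on the orthant. -/
theorem uniform_shrinkage_forces_positive_discount (n : ℕ) (hn : 1 ≤ n)
    (f : ℝ) (hf : f ∈ Set.Ioo (0 : ℝ) 1)
    (R : EuclideanSpace ℝ (Fin n)) (hR : ∀ i, 0 ≤ R i) (hR0 : R ≠ 0)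
    (ℓ : EuclideanSpace ℝ (Fin n)) (hℓ : ∀ i, 0 ≤ ℓ i)
    (F : EuclideanSpace ℝ (Fin n) → ℝ)
    (hFdiff : DifferentiableOn ℝ F {p : EuclideanSpace ℝ (Fin n) | ∀ i, 0 < p i})
    (hF : ∀ p : EuclideanSpace ℝ (Fin n), (∀ i, 0 < p i) → 0 < 1 + F p)
    (heuler : ∀ p : EuclideanSpace ℝ (Fin n), (∀ i, 0 < p i) →
      ∑ i, gradient F p i * p i = 0)
    (c : ℝ) (hc : c ∈ Set.Ioo (0 : ℝ) 1)
    (hshrink : ∀ p : EuclideanSpace ℝ (Fin n), (∀ i, 0 < p i) →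
      ∀ i, gradient (fun q : EuclideanSpace ℝ (Fin n) =>
        (∑ j, q j * R j) / (1 + F q) + f * (∑ j, q j * ℓ j)) p i ≤ c * R i) :
    ∀ p : EuclideanSpace ℝ (Fin n), (∀ i, 0 < p i) →
      1 / c - 1 ≤ F p ∧ 0 < 1 / c - 1 :=
  uniform_shrinkage_forces_positive_discount_general n f hf R hR hR0 ℓ hℓ F hFdiff hF heuler c hc
    hshrink
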